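/- Let ε > 0 and let u : ℤ² × ℝ → ℝ be differentiable in the real variable x₃, with u₃ = ∂₃u, and assume u₃ > 0 and Δ₁u > 0 at every point. Then at every point the identity Δ₁ log u₃ + Δ₂ log(Δ₁u/u₃) = (1/ε)·log[ (T₁u₃·(T₁₂u − T₂u)) / (T₂u₃·(T₁u − u)) ] holds. Consequently, the semi-discrete conservation law Δ₁ log u₃ + Δ₂ log(Δ₁u/u₃) = 0 holds at a point if and only if the differential–difference equation (T₁₂u − T₂u)·T₁u₃ = (T₁u − u)·T₂u₃ holds at that point. -/

import Mathlib

noncomputable section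

/-- Shift of the first (discrete) argument. -/
def S1 (v : ℤ × ℤ × ℝ → ℝ) : ℤ × ℤ × ℝ → ℝ := fun p => v (p.1 + 1, p.2.1, p.2.2)

/-- Shift of the second (discrete) argument. -/
def S2 (v : ℤ × ℤ × ℝ → ℝ) : ℤ × ℤ × ℝ → ℝ := fun p => v (p.1, p.2.1 + 1, p.2.2)

/-- Partial derivative with respect to the third (continuous) variable `x₃`. -/
def d3 (v : ℤ × ℤ × ℝ → ℝ) : ℤ × ℤ × ℝ → ℝ :=
  fun p => deriv (fun s => v (p.1, p.2.1, s)) p.2.2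

/-- Semi-discrete derivative `Δ₁ = (S₁ - 1)/ε`. -/
def D1 (ε : ℝ) (v : ℤ × ℤ × ℝ → ℝ) : ℤ × ℤ × ℝ → ℝ := fun p => (S1 v p - v p) / ε

/-- Semi-discrete derivative `Δ₂ = (S₂ - 1)/ε`. -/
def D2 (ε : ℝ) (v : ℤ × ℤ × ℝ → ℝ) : ℤ × ℤ × ℝ → ℝ := fun p => (S2 v p - v p) / ε

/-! Everything is pointwise: the conservation law expands into logarithms of the five
positive quantities `u₃, T₁u₃, T₂u₃, T₁u − u, T₁₂u − T₂u`, and the two `log ε` terms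
coming from `Δ₁u` cancel in `Δ₂`. What remains is `(1/ε)` times the logarithm of a
cross ratio, which vanishes exactly when the cross ratio is `1`. -/

open Real

theorem log_sub_div_add_log_sub_div_eq {ε a a₁ a₂ b b₂ : ℝ} (hε : ε ≠ 0)
    (ha : a ≠ 0) (ha₁ : a₁ ≠ 0) (ha₂ : a₂ ≠ 0) (hb : b ≠ 0) (hb₂ : b₂ ≠ 0) :
    (log a₁ - log a) / ε + (log (b₂ / ε / a₂) - log (b / ε / a)) / ε
      = 1 / ε * log (a₁ * b₂ / (a₂ * b)) := by
  rw [log_div (div_ne_zero hb₂ hε) ha₂, log_div hb₂ hε, log_div (div_ne_zero hb hε) ha,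
    log_div hb hε, log_div (mul_ne_zero ha₁ hb₂) (mul_ne_zero ha₂ hb),
    log_mul ha₁ hb₂, log_mul ha₂ hb]
  ring

theorem one_div_mul_log_div_eq_zero_iff {ε x y : ℝ} (hε : ε ≠ 0) (hx : 0 < x) (hy : 0 < y) :
    1 / ε * log (x / y) = 0 ↔ x = y := by
  rw [mul_eq_zero, or_iff_right (one_div_ne_zero hε), log_div hx.ne' hy.ne', sub_eq_zero]
  exact log_injOn_pos.eq_iff hx hy

theorem semidiscrete_conservation_case4_general (ε : ℝ) (hε : 0 < ε) (u : ℤ × ℤ × ℝ → ℝ)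
    (hu3 : ∀ p : ℤ × ℤ × ℝ, 0 < d3 u p)
    (hD1 : ∀ p : ℤ × ℤ × ℝ, 0 < D1 ε u p) :
    ∀ p : ℤ × ℤ × ℝ,
      (D1 ε (fun q => Real.log (d3 u q)) p
          + D2 ε (fun q => Real.log (D1 ε u q / d3 u q)) p
        = (1 / ε) * Real.log ((S1 (d3 u) p * (S1 (S2 u) p - S2 u p))
            / (S2 (d3 u) p * (S1 u p - u p))))
      ∧ (D1 ε (fun q => Real.log (d3 u q)) p
          + D2 ε (fun q => Real.log (D1 ε u q / d3 u q)) p = 0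
        ↔ (S1 (S2 u) p - S2 u p) * S1 (d3 u) p = (S1 u p - u p) * S2 (d3 u) p) := by
  intro p
  have hS1 : ∀ q, 0 < S1 u q - u q := fun q => (div_pos_iff_of_pos_right hε).mp (hD1 q)
  have hS12 : 0 < S1 (S2 u) p - S2 u p := hS1 (p.1, p.2.1 + 1, p.2.2)
  have hT1 : 0 < S1 (d3 u) p := hu3 _
  have hT2 : 0 < S2 (d3 u) p := hu3 _
  have hlaw : D1 ε (fun q => log (d3 u q)) p + D2 ε (fun q => log (D1 ε u q / d3 u q)) p
      = 1 / ε * log ((S1 (d3 u) p * (S1 (S2 u) p - S2 u p)) / (S2 (d3 u) p * (S1 u p - u p))) :=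
    log_sub_div_add_log_sub_div_eq hε.ne' (hu3 p).ne' hT1.ne' hT2.ne' (hS1 p).ne' hS12.ne'
  refine ⟨hlaw, ?_⟩
  rw [hlaw, one_div_mul_log_div_eq_zero_iff hε.ne' (mul_pos hT1 hS12) (mul_pos hT2 (hS1 p)),
    mul_comm, mul_comm (S2 (d3 u) p)]

/-- For `u₃ > 0` and `Δ₁u > 0`, the semi-discrete conservation law
`Δ₁ log u₃ + Δ₂ log(Δ₁u/u₃)` equals
`(1/ε) log[(T₁u₃·(T₁₂u − T₂u))/(T₂u₃·(T₁u − u))]`; in particular it vanishes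
iff the differential–difference equation `(T₁₂u − T₂u)T₁u₃ = (T₁u − u)T₂u₃`
holds. -/
theorem semidiscrete_conservation_case4 (ε : ℝ) (hε : 0 < ε) (u : ℤ × ℤ × ℝ → ℝ)
    (hu : ∀ (m n : ℤ), Differentiable ℝ (fun s : ℝ => u (m, n, s)))
    (hu3 : ∀ p : ℤ × ℤ × ℝ, 0 < d3 u p)
    (hD1 : ∀ p : ℤ × ℤ × ℝ, 0 < D1 ε u p) :
    ∀ p : ℤ × ℤ × ℝ,
      (D1 ε (fun q => Real.log (d3 u q)) p
          + D2 ε (fun q => Real.log (D1 ε u q / d3 u q)) p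
        = (1 / ε) * Real.log ((S1 (d3 u) p * (S1 (S2 u) p - S2 u p))
            / (S2 (d3 u) p * (S1 u p - u p))))
      ∧ (D1 ε (fun q => Real.log (d3 u q)) p
          + D2 ε (fun q => Real.log (D1 ε u q / d3 u q)) p = 0
        ↔ (S1 (S2 u) p - S2 u p) * S1 (d3 u) p = (S1 u p - u p) * S2 (d3 u) p) :=
  semidiscrete_conservation_case4_general ε hε u hu3 hD1
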